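/- arXiv:2409.19340 — 2 statements merged into one kernel-verified Lean document; each statement's English description precedes it below -/
import Mathlib

section
/- Let $X_1,\dots,X_n$ be independent and identically distributed random variables with $\mathbb{P}(X_1=i)=p(i)$ for $1\le i\le K$, where $p(i)>0$ for all $i$, let $\hat p(i)$ be the empirical distribution, and let $\sigma>0$. Then for any $a>0$, $\mathbb{P}\Big(\frac{\sqrt{n}}{\sigma}\Big|\sum_{i=1}^{K}\hat p(i)\ln\frac{\hat p(i)}{p(i)}\Big|>a\Big) \le \frac{K-1}{a\sqrt{n}\,\sigma}$. -/
/-!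
Write `Z = ∑ p̂(i) log (p̂(i) / p(i))`, the Kullback–Leibler divergence of `p̂` from `p`.
Applying `log x ≤ x - 1` to `p(i)/p̂(i)` and to `p̂(i)/p(i)` gives `0 ≤ Z ≤ χ²`, where
`χ² = ∑ p̂(i)² / p(i) - 1`. Each `p̂(i)` is the mean of `n` independent Bernoulli(`p(i)`)
indicators, so `E p̂(i)² = p(i)² + p(i)(1 - p(i))/n` and `E χ² = (K - 1)/n`.
Markov's inequality for `χ²` at level `aσ/√n` gives the bound.
-/

open MeasureTheory ProbabilityTheory

/-- The empirical distribution `p̂(i)(ω) = (1/n) ∑_{j=1}^n 1_{X_j(ω) = i}`. -/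
noncomputable def empP {Ω : Type*} (X : ℕ → Ω → ℕ) (n i : ℕ) (ω : Ω) : ℝ :=
  (∑ j ∈ Finset.Icc 1 n, if X j ω = i then (1 : ℝ) else 0) / n

open Finset Real

lemma sub_le_mul_log_div {q r : ℝ} (hq : 0 ≤ q) (hr : 0 < r) : q - r ≤ q * log (q / r) := by
  rcases hq.eq_or_lt with rfl | hq
  · simpa using hr.le
  have := one_sub_inv_le_log_of_pos (div_pos hq hr)
  rw [inv_div] at this
  calc q - r = q * (1 - r / q) := by field_simp
    _ ≤ q * log (q / r) := by gcongr

lemma mul_log_div_le_sq_div_sub {q r : ℝ} (hq : 0 ≤ q) (hr : 0 < r) :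
    q * log (q / r) ≤ q ^ 2 / r - q := by
  calc q * log (q / r) ≤ q * (q / r - 1) := by
        rcases hq.eq_or_lt with rfl | hq
        · simp
        gcongr
        exact log_le_sub_one_of_pos (div_pos hq hr)
    _ = q ^ 2 / r - q := by ring

section Divergence

variable {ι : Type*} {s : Finset ι} {q r : ι → ℝ}

lemma sum_mul_log_div_nonneg (hq : ∀ i ∈ s, 0 ≤ q i) (hr : ∀ i ∈ s, 0 < r i)
    (hsum : ∑ i ∈ s, q i = ∑ i ∈ s, r i) : 0 ≤ ∑ i ∈ s, q i * log (q i / r i) := by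
  calc 0 = ∑ i ∈ s, (q i - r i) := by rw [sum_sub_distrib, hsum, sub_self]
    _ ≤ _ := sum_le_sum fun i hi ↦ sub_le_mul_log_div (hq i hi) (hr i hi)

lemma sum_mul_log_div_le_sum_sq_div_sub (hq : ∀ i ∈ s, 0 ≤ q i) (hr : ∀ i ∈ s, 0 < r i) :
    ∑ i ∈ s, q i * log (q i / r i) ≤ ∑ i ∈ s, q i ^ 2 / r i - ∑ i ∈ s, q i := by
  rw [← sum_sub_distrib]
  exact sum_le_sum fun i hi ↦ mul_log_div_le_sq_div_sub (hq i hi) (hr i hi)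

end Divergence

section Empirical

variable {Ω : Type*} {X : ℕ → Ω → ℕ} {n i : ℕ}

lemma empP_nonneg (ω : Ω) : 0 ≤ empP X n i ω := by
  unfold empP
  positivity

lemma sum_empP {t : Finset ℕ} {ω : Ω} (hn : n ≠ 0) (hX : ∀ j ∈ Icc 1 n, X j ω ∈ t) :
    ∑ i ∈ t, empP X n i ω = 1 := by
  unfold empP
  rw [← sum_div, sum_comm, sum_congr rfl fun j hj ↦ by rw [sum_ite_eq, if_pos (hX j hj)]]
  simp [hn]

end Empirical

section Moments

variable {Ω : Type*} [MeasurableSpace Ω] {μ : Measure Ω}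

lemma measure_ge_le_ofReal_integral_div [IsFiniteMeasure μ] {f : Ω → ℝ} (hf : 0 ≤ f)
    (hfi : Integrable f μ) {c : ℝ} (hc : 0 < c) :
    μ {ω | c ≤ f ω} ≤ ENNReal.ofReal ((∫ ω, f ω ∂μ) / c) := by
  rw [← ENNReal.ofReal_toReal (measure_ne_top μ _)]
  refine ENNReal.ofReal_le_ofReal ((le_div_iff₀ hc).2 ?_)
  rw [mul_comm]
  exact mul_meas_ge_le_integral_of_nonneg (ae_of_all μ hf) hfi c

lemma ProbabilityTheory.iIndepFun.pairwise_indepFun_Icc {β : Type*} [MeasurableSpace β]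
    {X : ℕ → Ω → β} {n : ℕ} (h : iIndepFun (fun k : Fin n ↦ X (k.1 + 1)) μ) :
    Set.Pairwise (Icc 1 n : Set ℕ) fun j k ↦ X j ⟂ᵢ[μ] X k := by
  intro j hj k hk hjk
  simp only [coe_Icc, Set.mem_Icc] at hj hk
  have := h.indepFun (i := ⟨j - 1, by omega⟩) (j := ⟨k - 1, by omega⟩) (by simp; omega)
  simpa only [Nat.sub_add_cancel hj.1, Nat.sub_add_cancel hk.1] using this

lemma integral_sum_sq_of_pairwise_indepFun [IsProbabilityMeasure μ] {ι : Type*} {s : Finset ι}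
    {Y : ι → Ω → ℝ} (hY : ∀ j ∈ s, MemLp (Y j) 2 μ)
    (hindep : Set.Pairwise s fun j k ↦ Y j ⟂ᵢ[μ] Y k) {m v : ℝ}
    (hmean : ∀ j ∈ s, μ[Y j] = m) (hvar : ∀ j ∈ s, Var[Y j; μ] = v) :
    ∫ ω, (∑ j ∈ s, Y j ω) ^ 2 ∂μ = #s * v + (#s * m) ^ 2 := by
  have hvarS := variance_eq_sub (memLp_finsetSum' s hY)
  simp only [Pi.pow_apply, Finset.sum_apply] at hvarS
  rw [IndepFun.variance_sum hY hindep, sum_congr rfl hvar,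
    integral_finsetSum s fun j hj ↦ (hY j hj).integrable one_le_two,
    sum_congr rfl hmean] at hvarS
  simp only [sum_const, nsmul_eq_mul] at hvarS
  linarith

section Bernoulli

variable {α : Type*} [MeasurableSpace α] [MeasurableSingletonClass α] [DecidableEq α]
  {Y : Ω → α} {a : α} {q : ℝ}

lemma measurable_ite_eq_one_zero (hY : Measurable Y) :
    Measurable fun ω ↦ if Y ω = a then (1 : ℝ) else 0 :=
  Measurable.ite (hY (measurableSet_singleton a)) measurable_const measurable_const

lemma memLp_ite_eq_one_zero [IsFiniteMeasure μ] (hY : Measurable Y) (p : ENNReal) :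
    MemLp (fun ω ↦ if Y ω = a then (1 : ℝ) else 0) p μ :=
  memLp_of_bounded (a := 0) (b := 1) (ae_of_all μ fun ω ↦ by split_ifs <;> simp)
    (measurable_ite_eq_one_zero hY).aestronglyMeasurable p

lemma integral_ite_eq_one_zero (hY : Measurable Y) (hq : 0 ≤ q)
    (h : μ {ω | Y ω = a} = ENNReal.ofReal q) : ∫ ω, (if Y ω = a then (1 : ℝ) else 0) ∂μ = q := by
  rw [integral_of_ae_eq_zero_or_one (measurable_ite_eq_one_zero hY).aemeasurable
    (ae_of_all μ fun ω ↦ by split_ifs <;> simp)]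
  simp [measureReal_def, h, hq]

lemma variance_ite_eq_one_zero [IsProbabilityMeasure μ] (hY : Measurable Y) (hq : 0 ≤ q)
    (h : μ {ω | Y ω = a} = ENNReal.ofReal q) :
    Var[fun ω ↦ if Y ω = a then (1 : ℝ) else 0; μ] = q * (1 - q) := by
  rw [variance_of_ae_eq_zero_or_one (measurable_ite_eq_one_zero hY).aemeasurable
    (ae_of_all μ fun ω ↦ by split_ifs <;> simp)]
  have h1 : μ.real {ω | Y ω = a} = q := by simp [measureReal_def, h, hq]
  have h0 : μ.real {ω | ¬Y ω = a} = 1 - q := by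
    rw [← h1]
    exact probReal_compl_eq_one_sub (hY (measurableSet_singleton a))
  simp only [ite_eq_right_iff, one_ne_zero, imp_false, ite_eq_left_iff, zero_ne_one, not_not]
  rw [h0, h1, mul_comm]

end Bernoulli

variable {X : ℕ → Ω → ℕ} {n i : ℕ}

lemma memLp_empP [IsFiniteMeasure μ] (hmeas : ∀ j, Measurable (X j)) :
    MemLp (empP X n i) 2 μ := by
  unfold empP
  simpa only [div_eq_mul_inv] using
    (memLp_finsetSum (Icc 1 n) fun j _ ↦ memLp_ite_eq_one_zero (a := i) (hmeas j) 2).mul_const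
      ((n : ℝ)⁻¹)

lemma integral_empP_sq [IsProbabilityMeasure μ] {q : ℝ} (hn : n ≠ 0)
    (hmeas : ∀ j, Measurable (X j))
    (hindep : Set.Pairwise (Icc 1 n : Set ℕ) fun j k ↦ X j ⟂ᵢ[μ] X k) (hq : 0 ≤ q)
    (hdist : ∀ j ∈ Icc 1 n, μ {ω | X j ω = i} = ENNReal.ofReal q) :
    ∫ ω, empP X n i ω ^ 2 ∂μ = q ^ 2 + q * (1 - q) / n := by
  have hind : Measurable fun x : ℕ ↦ if x = i then (1 : ℝ) else 0 := measurable_from_nat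
  have hsum := integral_sum_sq_of_pairwise_indepFun (s := Icc 1 n)
    (fun j _ ↦ memLp_ite_eq_one_zero (hmeas j) 2)
    (hindep.mono' fun j k h ↦ h.comp hind hind)
    (fun j hj ↦ integral_ite_eq_one_zero (hmeas j) hq (hdist j hj))
    (fun j hj ↦ variance_ite_eq_one_zero (hmeas j) hq (hdist j hj))
  simp_rw [empP, div_pow]
  rw [integral_div, hsum, Nat.card_Icc, Nat.add_sub_cancel]
  field_simp
  ring

lemma integral_sum_empP_sq_div_sub_one [IsProbabilityMeasure μ] {t : Finset ℕ} {p : ℕ → ℝ}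
    (hn : n ≠ 0) (hmeas : ∀ j, Measurable (X j))
    (hindep : Set.Pairwise (Icc 1 n : Set ℕ) fun j k ↦ X j ⟂ᵢ[μ] X k)
    (hpos : ∀ i ∈ t, 0 < p i) (hsum : ∑ i ∈ t, p i = 1)
    (hdist : ∀ j ∈ Icc 1 n, ∀ i ∈ t, μ {ω | X j ω = i} = ENNReal.ofReal (p i)) :
    ∫ ω, (∑ i ∈ t, empP X n i ω ^ 2 / p i - 1) ∂μ = (#t - 1) / n := by
  have hterm : ∀ i ∈ t, ∫ ω, empP X n i ω ^ 2 / p i ∂μ = p i + (1 - p i) / n := by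
    intro i hi
    rw [integral_div, integral_empP_sq hn hmeas hindep (hpos i hi).le fun j hj ↦ hdist j hj i hi]
    field_simp [(hpos i hi).ne']
  have hint : ∀ i ∈ t, Integrable (fun ω ↦ empP X n i ω ^ 2 / p i) μ :=
    fun i _ ↦ (memLp_empP hmeas).integrable_sq.div_const _
  rw [integral_sub (integrable_finsetSum _ hint) (integrable_const 1), integral_finsetSum _ hint,
    sum_congr rfl hterm, sum_add_distrib, ← sum_div, sum_sub_distrib, hsum]
  simp

end Moments

theorem kl_term_markov_bound_general
    {Ω : Type*} [MeasurableSpace Ω] (μ : Measure Ω) [IsProbabilityMeasure μ]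
    (X : ℕ → Ω → ℕ) (n K : ℕ) (p : ℕ → ℝ) (σ : ℝ) (a : ℝ)
    (hn : 1 ≤ n)
    (hmeas : ∀ j, Measurable (X j))
    (hpos : ∀ i ∈ Finset.Icc 1 K, 0 < p i)
    (hsum : ∑ i ∈ Finset.Icc 1 K, p i = 1)
    (hrange : ∀ j ∈ Finset.Icc 1 n, ∀ ω, X j ω ∈ Finset.Icc 1 K)
    (hdist : ∀ j ∈ Finset.Icc 1 n, ∀ i ∈ Finset.Icc 1 K,
      μ {ω | X j ω = i} = ENNReal.ofReal (p i))
    (hindep : iIndepFun (fun k : Fin n => X (k.1 + 1)) μ)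
    (hσ : 0 < σ) (ha : 0 < a) :
    μ {ω | a < Real.sqrt (n : ℝ) / σ *
        |∑ i ∈ Finset.Icc 1 K, empP X n i ω * Real.log (empP X n i ω / p i)|}
      ≤ ENNReal.ofReal (((K : ℝ) - 1) / (a * Real.sqrt (n : ℝ) * σ)) := by
  have hn0 : n ≠ 0 := by omega
  set W : Ω → ℝ := fun ω ↦ ∑ i ∈ Icc 1 K, empP X n i ω ^ 2 / p i - 1
  have hKL_le_W : ∀ ω, |∑ i ∈ Icc 1 K, empP X n i ω * log (empP X n i ω / p i)| ≤ W ω := by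
    intro ω
    have hone := sum_empP hn0 fun j hj ↦ hrange j hj ω
    have hnonneg : ∀ i ∈ Icc 1 K, 0 ≤ empP X n i ω := fun i _ ↦ empP_nonneg ω
    rw [abs_of_nonneg (sum_mul_log_div_nonneg hnonneg hpos (hone.trans hsum.symm))]
    simpa only [hone] using sum_mul_log_div_le_sum_sq_div_sub hnonneg hpos
  have hW_int : Integrable W μ :=
    (integrable_finsetSum _ fun i _ ↦ (memLp_empP hmeas).integrable_sq.div_const _).sub
      (integrable_const 1)
  have hEW : ∫ ω, W ω ∂μ = ((K : ℝ) - 1) / n := by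
    simpa using
      integral_sum_empP_sq_div_sub_one hn0 hmeas hindep.pairwise_indepFun_Icc hpos hsum hdist
  have hsqrt : 0 < √(n : ℝ) := by positivity
  calc _ ≤ μ {ω | a * σ / √(n : ℝ) ≤ W ω} := by
        refine measure_mono fun ω hω ↦ ?_
        simp only [Set.mem_ofPred_eq] at hω ⊢
        rw [div_mul_eq_mul_div, lt_div_iff₀ hσ, ← div_lt_iff₀' hsqrt] at hω
        exact hω.le.trans (hKL_le_W ω)
    _ ≤ ENNReal.ofReal ((∫ ω, W ω ∂μ) / (a * σ / √(n : ℝ))) :=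
        measure_ge_le_ofReal_integral_div (fun ω ↦ (abs_nonneg _).trans (hKL_le_W ω)) hW_int
          (by positivity)
    _ = _ := by
        rw [hEW]
        congr 1
        field_simp
        rw [sq_sqrt (Nat.cast_nonneg n)]

/-- Markov-type bound:
`P((√n/σ)|∑_i p̂(i) ln(p̂(i)/p(i))| > a) ≤ (K−1)/(a √n σ)`
(terms with `p̂(i) = 0` vanish, automatic since `Real.log 0 = 0` in Lean). -/
theorem kl_term_markov_bound
    {Ω : Type*} [MeasurableSpace Ω] (μ : Measure Ω) [IsProbabilityMeasure μ]
    (X : ℕ → Ω → ℕ) (n K : ℕ) (p : ℕ → ℝ) (σ : ℝ) (a : ℝ)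
    (hn : 1 ≤ n) (hK : 1 ≤ K)
    (hmeas : ∀ j, Measurable (X j))
    (hpos : ∀ i ∈ Finset.Icc 1 K, 0 < p i)
    (hsum : ∑ i ∈ Finset.Icc 1 K, p i = 1)
    (hrange : ∀ j ∈ Finset.Icc 1 n, ∀ ω, X j ω ∈ Finset.Icc 1 K)
    (hdist : ∀ j ∈ Finset.Icc 1 n, ∀ i ∈ Finset.Icc 1 K,
      μ {ω | X j ω = i} = ENNReal.ofReal (p i))
    (hindep : iIndepFun (fun k : Fin n => X (k.1 + 1)) μ)
    (hσ : 0 < σ) (ha : 0 < a) :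
    μ {ω | a < Real.sqrt (n : ℝ) / σ *
        |∑ i ∈ Finset.Icc 1 K, empP X n i ω * Real.log (empP X n i ω / p i)|}
      ≤ ENNReal.ofReal (((K : ℝ) - 1) / (a * Real.sqrt (n : ℝ) * σ)) :=
  kl_term_markov_bound_general μ X n K p σ a hn hmeas hpos hsum hrange hdist hindep hσ ha
end

section
/- For each integer $K\ge 3$, let $C_K=\sum_{i=2}^{K}\frac{1}{i\ln i}$ and consider the distribution $p_K(i)=(C_K\, i\ln i)^{-1}$ for $2\le i\le K$. Then the variance $\sigma_K^2=\sum_{i=2}^{K}p_K(i)\ln^2 p_K(i)-\big(\sum_{i=2}^{K}p_K(i)\ln p_K(i)\big)^2$ satisfies $\sigma_K^2 \sim \frac{1}{2}\frac{(\ln K)^2}{\ln\ln K}$ as $K\to\infty$, i.e. $\lim_{K\to\infty}\sigma_K^2\,\ln\ln K/(\ln K)^2 = 1/2$. -/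
/-!
Since `log p_K(i) = -log C_K - (log i + log log i)`, `σ_K²` is the variance of
`X i = log i + log log i` under `p_K`. With `ℓ = log log K`, `X i` differs from `log i` by at most
`ℓ`, so `σ_K²` differs from `E[(log i)²] = C_K⁻¹ ∑ log i / i` by at most `2 (E[log i] + ℓ)²`, and
`E[log i] = C_K⁻¹ ∑ 1 / i ≤ log K / ℓ` because `C_K ≥ ℓ`. Comparing sums of antitone functions with
integrals gives `∑_{i ≤ K} log i / i = (log K)² / 2 + O(1)` and `C_K = ℓ + O(1)`, so
`σ_K² = (log K)² / (2ℓ) · (1 + o(1)) + O((log K / ℓ)² + ℓ²)`, an error of order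
`o((log K)² / ℓ)`.
-/

open Filter

/-- The normalizing constant `C_K = ∑_{i=2}^K 1/(i ln i)`. -/
noncomputable def loglogC (K : ℕ) : ℝ :=
  ∑ i ∈ Finset.Icc 2 K, ((i : ℝ) * Real.log (i : ℝ))⁻¹

/-- The distribution `p_K(i) = (C_K i ln i)⁻¹`, `2 ≤ i ≤ K`. -/
noncomputable def loglogP (K i : ℕ) : ℝ := (loglogC K * (i : ℝ) * Real.log (i : ℝ))⁻¹

/-- The variance parameter `σ_K² = ∑_i p_K(i) ln² p_K(i) − (∑_i p_K(i) ln p_K(i))²`. -/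
noncomputable def loglogVar (K : ℕ) : ℝ :=
  ∑ i ∈ Finset.Icc 2 K, loglogP K i * (Real.log (loglogP K i)) ^ 2
    - (∑ i ∈ Finset.Icc 2 K, loglogP K i * Real.log (loglogP K i)) ^ 2

open Real Topology Finset

section WeightedVariance

variable {ι : Type*} {s : Finset ι} {w : ι → ℝ}

variable (s w) in
noncomputable def weightedVar (x : ι → ℝ) : ℝ :=
  ∑ i ∈ s, w i * x i ^ 2 - (∑ i ∈ s, w i * x i) ^ 2

lemma weightedVar_const_sub (hw : ∑ i ∈ s, w i = 1) (c : ℝ) (x : ι → ℝ) :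
    weightedVar s w (fun i => c - x i) = weightedVar s w x := by
  have hsq : ∑ i ∈ s, w i * (c - x i) ^ 2
      = c ^ 2 * ∑ i ∈ s, w i - 2 * c * ∑ i ∈ s, w i * x i + ∑ i ∈ s, w i * x i ^ 2 := by
    simp only [mul_sum, ← sum_sub_distrib, ← sum_add_distrib]
    exact sum_congr rfl fun i _ => by ring
  have hlin : ∑ i ∈ s, w i * (c - x i) = c * ∑ i ∈ s, w i - ∑ i ∈ s, w i * x i := by
    simp only [mul_sum, ← sum_sub_distrib]
    exact sum_congr rfl fun i _ => by ring
  simp only [weightedVar, hsq, hlin, hw]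
  ring

lemma abs_sum_mul_sub_sum_mul_le (hw0 : ∀ i ∈ s, 0 ≤ w i) {x u d : ι → ℝ}
    (h : ∀ i ∈ s, |x i - u i| ≤ d i) :
    |∑ i ∈ s, w i * x i - ∑ i ∈ s, w i * u i| ≤ ∑ i ∈ s, w i * d i := by
  rw [← sum_sub_distrib]
  refine (abs_sum_le_sum_abs _ _).trans (sum_le_sum fun i hi => ?_)
  rw [← mul_sub, abs_mul, abs_of_nonneg (hw0 i hi)]
  exact mul_le_mul_of_nonneg_left (h i hi) (hw0 i hi)

lemma abs_weightedVar_sub_le (hw0 : ∀ i ∈ s, 0 ≤ w i) (hw : ∑ i ∈ s, w i = 1)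
    {x u : ι → ℝ} {m : ℝ} (hu : ∀ i ∈ s, 0 ≤ u i) (hxu : ∀ i ∈ s, |x i - u i| ≤ m) :
    |weightedVar s w x - ∑ i ∈ s, w i * u i ^ 2| ≤ 2 * (∑ i ∈ s, w i * u i + m) ^ 2 := by
  set μ := ∑ i ∈ s, w i * u i
  have hμ : 0 ≤ μ := sum_nonneg fun i hi => mul_nonneg (hw0 i hi) (hu i hi)
  have hmean : |∑ i ∈ s, w i * x i - μ| ≤ m := by
    simpa [← sum_mul, hw] using abs_sum_mul_sub_sum_mul_le hw0 hxu
  have hsq : |∑ i ∈ s, w i * x i ^ 2 - ∑ i ∈ s, w i * u i ^ 2| ≤ m ^ 2 + 2 * m * μ := by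
    have hpt : ∀ i ∈ s, |x i ^ 2 - u i ^ 2| ≤ m * (m + 2 * u i) := fun i hi => by
      have hsum : |x i - u i + 2 * u i| ≤ m + 2 * u i := (abs_add_le _ _).trans
        (by rw [abs_of_nonneg (a := 2 * u i) (by linarith [hu i hi])]; linarith [hxu i hi])
      rw [show x i ^ 2 - u i ^ 2 = (x i - u i) * (x i - u i + 2 * u i) by ring, abs_mul]
      exact mul_le_mul (hxu i hi) hsum (abs_nonneg _) ((abs_nonneg _).trans (hxu i hi))
    have hd : ∑ i ∈ s, w i * (m * (m + 2 * u i)) = m ^ 2 + 2 * m * μ := by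
      rw [sum_congr rfl fun i _ => show w i * (m * (m + 2 * u i))
          = m ^ 2 * w i + 2 * m * (w i * u i) by ring,
        sum_add_distrib, ← mul_sum, ← mul_sum, hw, mul_one]
    exact hd ▸ abs_sum_mul_sub_sum_mul_le hw0 hpt
  rw [abs_le] at hmean hsq ⊢
  unfold weightedVar
  constructor <;> nlinarith

end WeightedVariance

lemma AntitoneOn.integral_add_le_sum_Icc {f : ℝ → ℝ} {a b : ℕ} (hab : a ≤ b)
    (hf : AntitoneOn f (Set.Icc a b)) :
    (∫ x in (a : ℝ)..b, f x) + f b ≤ ∑ i ∈ Icc a b, f i := by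
  rw [← Ico_insert_right hab, sum_insert right_notMem_Ico]
  linarith [hf.integral_le_sum_Ico hab]

lemma AntitoneOn.sum_Icc_le_add_integral {f : ℝ → ℝ} {a b : ℕ} (hab : a ≤ b)
    (hf : AntitoneOn f (Set.Icc a b)) :
    ∑ i ∈ Icc a b, f i ≤ f a + ∫ x in (a : ℝ)..b, f x := by
  have hshift : ∑ i ∈ Ioc a b, f i = ∑ i ∈ Ico a b, f ↑(i + 1) := by
    rw [sum_Ico_add' (fun i : ℕ => f i), Finset.Ico_add_one_add_one_eq_Ioc]
  rw [← add_sum_Ioc_eq_sum_Icc hab, hshift]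
  gcongr
  exact hf.sum_le_integral_Ico hab

lemma antitoneOn_inv_mul_log : AntitoneOn (fun x => (x * log x)⁻¹) (Set.Ioi 1) := by
  intro x hx y hy hxy
  have hx1 : (1 : ℝ) < x := hx
  have hlx : 0 < log x := log_pos hx1
  exact inv_anti₀ (mul_pos (by linarith) hlx)
    (mul_le_mul hxy (log_le_log (by linarith) hxy) hlx.le (by linarith))

lemma integral_inv_mul_log {a b : ℝ} (ha : 1 < a) (hab : a ≤ b) :
    ∫ x in a..b, (x * log x)⁻¹ = log (log b) - log (log a) := by
  have hmem : ∀ x ∈ Set.uIcc a b, 1 < x := fun x hx => by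
    rw [Set.uIcc_of_le hab] at hx; exact ha.trans_le hx.1
  refine intervalIntegral.integral_eq_sub_of_hasDerivAt (f := fun x => log (log x))
    (fun x hx => ?_) ?_
  · have hx1 := hmem x hx
    exact ((hasDerivAt_log (by positivity)).log (log_pos hx1).ne').congr_deriv
      (by rw [mul_inv, div_eq_mul_inv])
  · refine ContinuousOn.intervalIntegrable fun x hx => ?_
    have hx1 := hmem x hx
    exact ((continuousAt_id.mul (continuousAt_log (by positivity))).inv₀
      (mul_pos (by positivity) (log_pos hx1)).ne').continuousWithinAt

lemma integral_log_div_self {a b : ℝ} (ha : 0 < a) (hab : a ≤ b) :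
    ∫ x in a..b, log x / x = log b ^ 2 / 2 - log a ^ 2 / 2 := by
  have hmem : ∀ x ∈ Set.uIcc a b, 0 < x := fun x hx => by
    rw [Set.uIcc_of_le hab] at hx; exact ha.trans_le hx.1
  refine intervalIntegral.integral_eq_sub_of_hasDerivAt (f := fun x => log x ^ 2 / 2)
    (fun x hx => ?_) ?_
  · exact (((hasDerivAt_log (hmem x hx).ne').pow 2).div_const 2).congr_deriv (by ring)
  · refine ContinuousOn.intervalIntegrable fun x hx => ?_
    exact ((continuousAt_log (hmem x hx).ne').div continuousAt_id
      (hmem x hx).ne').continuousWithinAt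

lemma tendsto_div_of_abs_sub_le {α : Type*} {l : Filter α} {f g : α → ℝ} {c M : ℝ}
    (hg : Tendsto g l atTop) (hfg : ∀ᶠ x in l, |f x - c * g x| ≤ M) :
    Tendsto (fun x => f x / g x) l (𝓝 c) := by
  rw [tendsto_iff_norm_sub_tendsto_zero]
  refine squeeze_zero_norm' ?_ (by simpa using (tendsto_inv_atTop_zero.comp hg).const_mul M)
  filter_upwards [hfg, hg.eventually_gt_atTop 0] with x hx hgx
  rw [norm_norm, Real.norm_eq_abs, show f x / g x - c = (f x - c * g x) / g x by field_simp,
    abs_div, abs_of_pos hgx, div_eq_mul_inv]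
  gcongr

lemma tendsto_inv_log_add_log_pow_three_div_sq :
    Tendsto (fun t => (log t)⁻¹ + log t ^ 3 / t ^ 2) atTop (𝓝 0) := by
  have h3 : Tendsto (fun t => log t ^ 3 / t * t⁻¹) atTop (𝓝 0) := by
    simpa using (tendsto_pow_log_div_mul_add_atTop 1 0 3 one_ne_zero).mul tendsto_inv_atTop_zero
  simpa using (tendsto_inv_atTop_zero.comp tendsto_log_atTop).add
    (h3.congr fun t => by ring)

lemma log_log_two_nonpos : log (log 2) ≤ 0 :=
  log_nonpos (log_nonneg one_le_two) (by linarith [log_two_lt_d9])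

lemma neg_one_le_log_log_two : -1 ≤ log (log 2) := by
  rw [le_log_iff_exp_le (log_pos one_lt_two)]
  linarith [exp_neg_one_lt_d9, log_two_gt_d9]

lemma sum_Icc_two_inv_le_log (K : ℕ) : ∑ i ∈ Icc 2 K, (i : ℝ)⁻¹ ≤ log K := by
  rcases Nat.eq_zero_or_pos K with rfl | hK
  · simp
  have h := harmonic_le_one_add_log K
  rw [harmonic_eq_sum_Icc, ← add_sum_Ioc_eq_sum_Icc hK, ← Icc_add_one_left_eq_Ioc] at h
  push_cast at h
  linarith

lemma loglogC_mem_Icc {K : ℕ} (hK : 2 ≤ K) :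
    loglogC K - (log (log K) - log (log 2)) ∈ Set.Icc 0 (2 * log 2)⁻¹ := by
  have hK' : (2 : ℝ) ≤ K := by exact_mod_cast hK
  have hf : AntitoneOn (fun x => (x * log x)⁻¹) (Set.Icc ((2 : ℕ) : ℝ) K) :=
    antitoneOn_inv_mul_log.mono fun x hx => one_lt_two.trans_le (by simpa using hx.1)
  have hlow := hf.integral_add_le_sum_Icc hK
  have hup := hf.sum_Icc_le_add_integral hK
  push_cast at hlow hup
  rw [integral_inv_mul_log one_lt_two hK'] at hlow hup
  have := log_pos (one_lt_two.trans_le hK')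
  rw [Set.mem_Icc, loglogC]
  constructor
  · have : 0 ≤ ((K : ℝ) * log K)⁻¹ := by positivity
    linarith
  · linarith

lemma log_log_le_loglogC {K : ℕ} (hK : 2 ≤ K) : log (log K) ≤ loglogC K := by
  linarith [(loglogC_mem_Icc hK).1, log_log_two_nonpos]

lemma tendsto_log_log_div_loglogC :
    Tendsto (fun K : ℕ => log (log K) / loglogC K) atTop (𝓝 1) := by
  have h : Tendsto (fun K : ℕ => loglogC K / log (log K)) atTop (𝓝 1) := by
    refine tendsto_div_of_abs_sub_le (M := (2 * log 2)⁻¹ + |log (log 2)|)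
      (tendsto_log_atTop.comp (tendsto_log_atTop.comp tendsto_natCast_atTop_atTop)) ?_
    filter_upwards [eventually_ge_atTop 2] with K hK
    calc |loglogC K - 1 * log (log K)|
        ≤ |loglogC K - (log (log K) - log (log 2))| + |log (log 2)| := by
          rw [one_mul]
          exact (abs_sub_le _ _ _).trans_eq (by rw [sub_sub_cancel_left, abs_neg])
      _ ≤ (2 * log 2)⁻¹ + |log (log 2)| := by
          gcongr
          obtain ⟨h0, h1⟩ := loglogC_mem_Icc hK
          rw [abs_of_nonneg h0]
          exact h1
  simpa using h.inv₀ one_ne_zero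

lemma tendsto_sum_log_div_self_div_log_sq :
    Tendsto (fun K : ℕ => (∑ i ∈ Icc 2 K, log i / i) / log K ^ 2) atTop (𝓝 (1 / 2)) := by
  refine tendsto_div_of_abs_sub_le (M := log 2 / 2 + log 3 / 3 + log 3 ^ 2 / 2)
    ((tendsto_pow_atTop two_ne_zero).comp (tendsto_log_atTop.comp tendsto_natCast_atTop_atTop)) ?_
  filter_upwards [eventually_ge_atTop 3] with K hK
  have hK' : (3 : ℝ) ≤ K := by exact_mod_cast hK
  have hf : AntitoneOn (fun x => log x / x) (Set.Icc ((3 : ℕ) : ℝ) K) :=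
    log_div_self_antitoneOn.mono fun x hx =>
      (exp_one_lt_d9.le.trans (by norm_num : (2.7182818286 : ℝ) ≤ 3)).trans
        (by simpa using hx.1)
  have hlow := hf.integral_add_le_sum_Icc hK
  have hup := hf.sum_Icc_le_add_integral hK
  push_cast at hlow hup
  rw [integral_log_div_self three_pos hK'] at hlow hup
  have hsplit : ∑ i ∈ Icc 2 K, log i / i = log 2 / 2 + ∑ i ∈ Icc 3 K, log i / i := by
    rw [← add_sum_Ioc_eq_sum_Icc (by omega), ← Icc_add_one_left_eq_Ioc]
    norm_num
  have h2 := log_pos one_lt_two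
  have h3 := log_pos (by norm_num : (1 : ℝ) < 3)
  have hK0 : 0 ≤ log K / K := div_nonneg (log_nonneg (by linarith)) (by linarith)
  simp only [hsplit]
  rw [abs_le]
  constructor <;> nlinarith

lemma loglogC_pos {K : ℕ} (hK : 2 ≤ K) : 0 < loglogC K := by
  refine sum_pos (fun i hi => ?_) ⟨2, by simp [hK]⟩
  have hi : (1 : ℝ) < i := by norm_cast; exact (mem_Icc.mp hi).1
  have := log_pos hi
  positivity

lemma sum_loglogP_mul (K : ℕ) (f : ℕ → ℝ) :
    ∑ i ∈ Icc 2 K, loglogP K i * f i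
      = (loglogC K)⁻¹ * ∑ i ∈ Icc 2 K, f i * ((i : ℝ) * log i)⁻¹ := by
  simp only [loglogP, mul_assoc, mul_inv, mul_sum]
  exact sum_congr rfl fun i _ => by ring

lemma sum_loglogP {K : ℕ} (hK : 2 ≤ K) : ∑ i ∈ Icc 2 K, loglogP K i = 1 := by
  have h := sum_loglogP_mul K 1
  simp only [Pi.one_apply, mul_one, one_mul] at h
  rw [h]
  exact inv_mul_cancel₀ (loglogC_pos hK).ne'

lemma log_loglogP {K i : ℕ} (hK : 2 ≤ K) (hi : 2 ≤ i) :
    log (loglogP K i) = -log (loglogC K) - (log i + log (log i)) := by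
  have hi' : (1 : ℝ) < i := by norm_cast
  have hC := loglogC_pos hK
  rw [loglogP, log_inv, log_mul (by positivity) (log_pos hi').ne', log_mul hC.ne' (by positivity)]
  ring

lemma loglogVar_eq_weightedVar {K : ℕ} (hK : 2 ≤ K) :
    loglogVar K = weightedVar (Icc 2 K) (loglogP K) (fun i => log i + log (log i)) := by
  rw [← weightedVar_const_sub (sum_loglogP hK) (-log (loglogC K))]
  unfold loglogVar weightedVar
  refine congrArg₂ (· - ·) (sum_congr rfl fun i hi => ?_)
    (congrArg (· ^ 2) (sum_congr rfl fun i hi => ?_)) <;>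
  rw [log_loglogP hK (mem_Icc.mp hi).1]

lemma sum_loglogP_mul_log_sq (K : ℕ) :
    ∑ i ∈ Icc 2 K, loglogP K i * log i ^ 2 = (loglogC K)⁻¹ * ∑ i ∈ Icc 2 K, log i / i := by
  rw [sum_loglogP_mul]
  congr 1
  refine sum_congr rfl fun i hi => ?_
  have := (log_pos (by exact_mod_cast (mem_Icc.mp hi).1 : (1 : ℝ) < i)).ne'
  field_simp

lemma sum_loglogP_mul_log_le {K : ℕ} (hK : 2 ≤ K) :
    ∑ i ∈ Icc 2 K, loglogP K i * log i ≤ log K / loglogC K := by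
  have hinv : ∑ i ∈ Icc 2 K, log i * ((i : ℝ) * log i)⁻¹ = ∑ i ∈ Icc 2 K, (i : ℝ)⁻¹ := by
    refine sum_congr rfl fun i hi => ?_
    have := (log_pos (by exact_mod_cast (mem_Icc.mp hi).1 : (1 : ℝ) < i)).ne'
    field_simp
  rw [sum_loglogP_mul, hinv, inv_mul_eq_div]
  gcongr
  · exact (loglogC_pos hK).le
  · exact sum_Icc_two_inv_le_log K

lemma abs_log_log_le {i K : ℕ} (hi : 2 ≤ i) (hiK : i ≤ K) (hK : 1 ≤ log (log K)) :
    |log (log i)| ≤ log (log K) := by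
  have hi' : (2 : ℝ) ≤ i := by exact_mod_cast hi
  have hlog := log_pos (one_lt_two.trans_le hi')
  rw [abs_le]
  constructor
  · have := log_le_log (log_pos one_lt_two) (log_le_log two_pos hi')
    linarith [neg_one_le_log_log_two]
  · exact log_le_log hlog (log_le_log (by linarith) (by exact_mod_cast hiK))

lemma abs_loglogVar_sub_le {K : ℕ} (hK : 1 ≤ log (log K)) :
    |loglogVar K - (loglogC K)⁻¹ * ∑ i ∈ Icc 2 K, log i / i|
      ≤ 4 * (log K / log (log K)) ^ 2 + 4 * log (log K) ^ 2 := by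
  have hK2 : 2 ≤ K := by
    by_contra! h
    interval_cases K <;> norm_num at hK
  set ℓ := log (log K)
  have hlog : ∀ i ∈ Icc 2 K, 0 < log i := fun i hi =>
    log_pos (by exact_mod_cast (mem_Icc.mp hi).1)
  have hp : ∀ i ∈ Icc 2 K, 0 ≤ loglogP K i := fun i hi => by
    have := hlog i hi
    have := loglogC_pos hK2
    unfold loglogP
    positivity
  have hmean : ∑ i ∈ Icc 2 K, loglogP K i * log i ≤ log K / ℓ :=
    (sum_loglogP_mul_log_le hK2).trans <| div_le_div_of_nonneg_left
      (log_nonneg (by exact_mod_cast one_le_two.trans hK2)) (by linarith) (log_log_le_loglogC hK2)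
  have hdev : ∀ i ∈ Icc 2 K, |(log i + log (log i)) - log i| ≤ ℓ := fun i hi => by
    rw [add_sub_cancel_left]
    exact abs_log_log_le (mem_Icc.mp hi).1 (mem_Icc.mp hi).2 hK
  rw [loglogVar_eq_weightedVar hK2, ← sum_loglogP_mul_log_sq]
  calc _ ≤ 2 * (∑ i ∈ Icc 2 K, loglogP K i * log i + ℓ) ^ 2 :=
        abs_weightedVar_sub_le hp (sum_loglogP hK2) (fun i hi => (hlog i hi).le) hdev
    _ ≤ 2 * (log K / ℓ + ℓ) ^ 2 := by
        have := sum_nonneg fun i hi => mul_nonneg (hp i hi) (hlog i hi).le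
        gcongr
    _ ≤ 4 * (log K / ℓ) ^ 2 + 4 * ℓ ^ 2 := by nlinarith [sq_nonneg (log K / ℓ - ℓ)]

/-- For the distribution `p_K(i) ∝ 1/(i ln i)`, `σ_K² ∼ (ln K)²/(2 ln ln K)` as `K → ∞`. -/
theorem loglog_variance_asymptotics :
    Tendsto (fun K : ℕ =>
        loglogVar K * Real.log (Real.log (K : ℝ)) / (Real.log (K : ℝ)) ^ 2)
      atTop (nhds (1 / 2)) := by
  have hL : Tendsto (fun K : ℕ => log K) atTop atTop :=
    tendsto_log_atTop.comp tendsto_natCast_atTop_atTop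
  have hmain := tendsto_sum_log_div_self_div_log_sq.mul tendsto_log_log_div_loglogC
  have herr : Tendsto (fun K : ℕ => (loglogVar K - (loglogC K)⁻¹ * ∑ i ∈ Icc 2 K, log i / i)
      * log (log K) / log K ^ 2) atTop (𝓝 0) := by
    refine squeeze_zero_norm' ?_
      (by simpa using (tendsto_inv_log_add_log_pow_three_div_sq.comp hL).const_mul 4)
    filter_upwards [hL.eventually_gt_atTop 0, (tendsto_log_atTop.comp hL).eventually_ge_atTop 1]
      with K hLpos hK
    have hℓ : 0 < log (log K) := by simp only [Function.comp_apply] at hK; linarith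
    rw [Real.norm_eq_abs, abs_div, abs_mul, abs_of_pos hℓ, abs_of_pos (pow_pos hLpos 2)]
    calc _ ≤ (4 * (log K / log (log K)) ^ 2 + 4 * log (log K) ^ 2) * log (log K) / log K ^ 2 := by
          gcongr ?_ * _ / _
          exact abs_loglogVar_sub_le hK
      _ = _ := by field_simp
  have h := hmain.add herr
  rw [mul_one, add_zero] at h
  exact h.congr fun K => by ring
end
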